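/- (Projection operator property, equation (28)) For every θ, y ∈ ℝⁿ and every θ* ∈ ℝⁿ with φ(θ*) ≤ 0 (equivalently ‖θ*‖₂² ≤ θ_max²/(ε_θ + 1)), it holds that (θ − θ*)ᵀ (Proj(θ, y) − y) ≤ 0. -/
import Mathlib


open Matrix

noncomputable section

/-- The convex function φ(θ) = ((ε_θ + 1) θᵀθ − θ_max²)/(ε_θ θ_max²). -/
def phiProj {n : ℕ} (θmax εθ : ℝ) (θ : Fin n → ℝ) : ℝ :=
  ((εθ + 1) * (θ ⬝ᵥ θ) - θmax ^ 2) / (εθ * θmax ^ 2)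

/-- The gradient ∇φ(θ) = 2(ε_θ + 1) θ / (ε_θ θ_max²). -/
def gradPhiProj {n : ℕ} (θmax εθ : ℝ) (θ : Fin n → ℝ) : Fin n → ℝ :=
  (2 * (εθ + 1) / (εθ * θmax ^ 2)) • θ

open Classical in
/-- The projection operator Proj(θ, y). -/
def projOp {n : ℕ} (θmax εθ : ℝ) (θ y : Fin n → ℝ) : Fin n → ℝ :=
  if phiProj θmax εθ θ < 0 then y
  else if gradPhiProj θmax εθ θ ⬝ᵥ y ≤ 0 then y
  else y - ((gradPhiProj θmax εθ θ ⬝ᵥ y)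
      / (gradPhiProj θmax εθ θ ⬝ᵥ gradPhiProj θmax εθ θ)
      * phiProj θmax εθ θ) • gradPhiProj θmax εθ θ

/-- The column-wise matrix projection operator Proj_m(Θ, Y). -/
def projOpM {n m : ℕ} (θmax εθ : ℝ) (Θ Y : Matrix (Fin n) (Fin m) ℝ) :
    Matrix (Fin n) (Fin m) ℝ :=
  Matrix.of fun k i => projOp θmax εθ (fun r => Θ r i) (fun r => Y r i) k

theorem statement13
    {n : ℕ} (θmax εθ : ℝ) (hθmax : 0 < θmax) (hεθ : 0 < εθ)
    (θ y θstar : Fin n → ℝ) (hθstar : phiProj θmax εθ θstar ≤ 0)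
    : (θ - θstar) ⬝ᵥ (projOp θmax εθ θ y - y) ≤ 0 := by
  have self_nonneg : ∀ v : Fin n → ℝ, 0 ≤ v ⬝ᵥ v := fun v =>
    Finset.sum_nonneg fun i _ => mul_self_nonneg (v i)
  unfold projOp
  split_ifs with h1 h2
  · simp
  · simp
  · push_neg at h1 h2
    set g := gradPhiProj θmax εθ θ with hg
    have hden : (0:ℝ) < εθ * θmax ^ 2 := by positivity
    -- From φ(θ) ≥ 0: (εθ+1) θ⬝θ ≥ θmax²
    have hθbig : θmax ^ 2 ≤ (εθ + 1) * (θ ⬝ᵥ θ) := by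
      have := h1
      unfold phiProj at this
      rw [le_div_iff₀ hden] at this
      linarith
    have hθsmall : (εθ + 1) * (θstar ⬝ᵥ θstar) ≤ θmax ^ 2 := by
      unfold phiProj at hθstar
      rw [div_nonpos_iff] at hθstar
      rcases hθstar with ⟨h, _⟩ | ⟨h, h'⟩
      · linarith
      · linarith
    have hss : θstar ⬝ᵥ θstar ≤ θ ⬝ᵥ θ := by
      have hpos : (0:ℝ) < εθ + 1 := by linarith
      nlinarith
    have hkey : 0 ≤ (θ - θstar) ⬝ᵥ θ := by
      have hsq := self_nonneg (θ - θstar)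
      simp only [sub_dotProduct, dotProduct_sub] at hsq ⊢
      have hc : θstar ⬝ᵥ θ = θ ⬝ᵥ θstar := dotProduct_comm _ _
      nlinarith
    have hgg : 0 ≤ (θ - θstar) ⬝ᵥ g := by
      rw [hg]
      unfold gradPhiProj
      rw [dotProduct_smul, smul_eq_mul]
      have : (0:ℝ) ≤ 2 * (εθ + 1) / (εθ * θmax ^ 2) := by positivity
      exact mul_nonneg this hkey
    have hc : 0 ≤ g ⬝ᵥ y / (g ⬝ᵥ g) * phiProj θmax εθ θ :=
      mul_nonneg (div_nonneg (le_of_lt h2) (self_nonneg g)) h1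
    have : (θ - θstar) ⬝ᵥ (y - (g ⬝ᵥ y / (g ⬝ᵥ g) * phiProj θmax εθ θ) • g - y)
        = -((g ⬝ᵥ y / (g ⬝ᵥ g) * phiProj θmax εθ θ) * ((θ - θstar) ⬝ᵥ g)) := by
      rw [sub_sub_cancel_left, dotProduct_neg, dotProduct_smul, smul_eq_mul]
    rw [this]
    exact neg_nonpos_of_nonneg (mul_nonneg hc hgg)
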